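/- arXiv:1301.2795 — 2 statements merged into one kernel-verified Lean document; each statement's English description precedes it below -/
import Mathlib

section
/- Let h, q ≥ 1 be integers, H = q·h, let α = (α₀, …, α_{q−1}) ∈ (ℤ/hℤ)^q, and let f : ℤ/hℤ → ℂ. Define φ_α : ℤ/Hℤ → ℤ/hℤ by φ_α(j·h + k) = k + α_j (mod h) for 0 ≤ k < h, 0 ≤ j < q, and set F_α = f ∘ φ_α. Then for every integer s, the cyclic correlation of F_α at t = s·h satisfies the exact identity RC_{F_α}(s·h) = (1/q)·Σ_{k=0}^{q−1} RC_f(α_{(k+s) mod q} − α_k). -/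
/-!
Writing `x = j·h + k` with `0 ≤ k < h` identifies `ℤ/qhℤ` with `ℤ/qℤ × ℤ/hℤ` as sets. Translation
by `s·h` moves the block index `j` to `j + s` and fixes `k`, and `φ_α` is `k ↦ k + α_j` on block
`j`. So the correlation sum of `F_α` splits into `q` block sums, and translating `k` by `α_j`
turns the `j`-th of them into `h · RC_f(α_{j+s} − α_j)`.
-/

/-- The cyclic correlation of `f : ℤ/hℤ → ℂ` at `t`:
`RC_f(t) = (1/h)·Σ_{j ∈ ℤ/hℤ} f(j+t)·conj(f(j))`. -/
noncomputable def cyclicCorr (h : ℕ) [NeZero h] (f : ZMod h → ℂ) (t : ZMod h) : ℂ :=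
  (h : ℂ)⁻¹ * ∑ j : ZMod h, f (j + t) * (starRingEnd ℂ) (f j)

/-- The projection `φ_α : ℤ/Hℤ → ℤ/hℤ` (for `H = q·h` and a tuple `α ∈ (ℤ/hℤ)^q`),
`φ_α(j·h + k) = k + α_j (mod h)` for `0 ≤ k < h`, `0 ≤ j < q`. -/
noncomputable def phiMap {m : ℕ} (h q : ℕ) (α : ZMod q → ZMod h) (x : ZMod m) : ZMod h :=
  ((x.val % h : ℕ) : ZMod h) + α ((x.val / h : ℕ) : ZMod q)

lemma cyclicCorr_sub (h : ℕ) [NeZero h] (f : ZMod h → ℂ) (a b : ZMod h) :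
    cyclicCorr h f (a - b) = (h : ℂ)⁻¹ * ∑ k : ZMod h, f (k + a) * starRingEnd ℂ (f (k + b)) := by
  rw [cyclicCorr]
  congr 1
  refine Fintype.sum_equiv (Equiv.subRight b) _ _ fun t => ?_
  rw [Equiv.subRight_apply, sub_add_cancel, sub_add_eq_add_sub, add_sub_assoc]

noncomputable def blockEmb (h q : ℕ) (p : ZMod q × ZMod h) : ZMod (q * h) :=
  ((p.1.val * h + p.2.val : ℕ) : ZMod (q * h))

section BlockEmb

variable {h q : ℕ} [NeZero h] [NeZero q]

lemma blockEmb_val (p : ZMod q × ZMod h) : (blockEmb h q p).val = p.1.val * h + p.2.val := by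
  apply ZMod.val_natCast_of_lt
  calc p.1.val * h + p.2.val < (p.1.val + 1) * h := by linarith [ZMod.val_lt p.2]
    _ ≤ q * h := Nat.mul_le_mul_right h (ZMod.val_lt p.1)

lemma blockEmb_val_div (p : ZMod q × ZMod h) : (blockEmb h q p).val / h = p.1.val := by
  rw [blockEmb_val, mul_comm, Nat.mul_add_div (NeZero.pos h), Nat.div_eq_of_lt (ZMod.val_lt p.2),
    add_zero]

lemma blockEmb_val_mod (p : ZMod q × ZMod h) : (blockEmb h q p).val % h = p.2.val := by
  rw [blockEmb_val, mul_comm, Nat.mul_add_mod, Nat.mod_eq_of_lt (ZMod.val_lt p.2)]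

lemma blockEmb_bijective : Function.Bijective (blockEmb h q) := by
  refine (Fintype.bijective_iff_injective_and_card _).mpr ⟨fun p p' hpp' => ?_, by simp [mul_comm]⟩
  have hdiv := congrArg (fun x => x.val / h) hpp'
  have hmod := congrArg (fun x => x.val % h) hpp'
  simp only [blockEmb_val_div, blockEmb_val_mod] at hdiv hmod
  exact Prod.ext (ZMod.val_injective q hdiv) (ZMod.val_injective h hmod)

lemma phiMap_blockEmb (α : ZMod q → ZMod h) (p : ZMod q × ZMod h) :
    phiMap h q α (blockEmb h q p) = p.2 + α p.1 := by
  simp [phiMap, blockEmb_val_div, blockEmb_val_mod]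

end BlockEmb

lemma blockEmb_add_intCast_mul {h q : ℕ} [NeZero q] (j : ZMod q) (k : ZMod h) (s : ℤ) :
    blockEmb h q (j, k) + (s : ZMod (q * h)) * h = blockEmb h q (j + s, k) := by
  have hval : ((j + s : ZMod q).val : ℤ) ≡ j.val + s [ZMOD q] := by
    rw [← ZMod.intCast_eq_intCast_iff]
    simp
  have hblock := (ZMod.intCast_eq_intCast_iff _ _ (q * h)).mpr (hval.mul_right' (c := h))
  simp only [blockEmb]
  push_cast at hblock ⊢
  linear_combination -hblock

lemma sum_phiMap_add_intCast_mul {M : Type*} [AddCommMonoid M] {h q : ℕ} [NeZero h] [NeZero q]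
    (α : ZMod q → ZMod h) (g : ZMod h → ZMod h → M) (s : ℤ) :
    ∑ x : ZMod (q * h),
        g (phiMap h q α (x + (s : ZMod (q * h)) * (h : ZMod (q * h)))) (phiMap h q α x)
      = ∑ j : ZMod q, ∑ k : ZMod h, g (k + α (j + s)) (k + α j) := by
  rw [← Fintype.sum_prod_type']
  refine (Fintype.sum_bijective _ blockEmb_bijective _ _ fun p => ?_).symm
  rw [blockEmb_add_intCast_mul, phiMap_blockEmb, phiMap_blockEmb]

/-- For `H = q·h`, `α ∈ (ℤ/hℤ)^q`, `F_α = f ∘ φ_α` and any integer `s`,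
the cyclic correlation of `F_α` at `t = s·h` satisfies the exact identity
`RC_{F_α}(s·h) = (1/q)·Σ_{k=0}^{q−1} RC_f(α_{(k+s) mod q} − α_k)`. -/
theorem cyclicCorr_comp_phiMap_at_multiples
    (h q : ℕ) [NeZero h] [NeZero q] (α : ZMod q → ZMod h) (f : ZMod h → ℂ) (s : ℤ) :
    cyclicCorr (q * h) (fun x => f (phiMap h q α x))
        ((s : ZMod (q * h)) * (h : ZMod (q * h)))
      = (q : ℂ)⁻¹ * ∑ k : ZMod q, cyclicCorr h f (α (k + (s : ZMod q)) - α k) := by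
  rw [cyclicCorr, sum_phiMap_add_intCast_mul α fun a b => f a * starRingEnd ℂ (f b),
    Nat.cast_mul, mul_inv, mul_assoc, Finset.mul_sum]
  simp_rw [cyclicCorr_sub]
end

section
/- Let h, q ≥ 1 be integers, H = q·h, and let f : ℤ/hℤ → ℂ have zero mean (Σ_{j ∈ ℤ/hℤ} f(j) = 0). Let α = (α₀, …, α_{q−1}) be uniformly distributed on (ℤ/hℤ)^q (i.e. average over all h^q tuples), and set F_α = f ∘ φ_α. Then for every integer s with 1 ≤ s ≤ q − 1, the expectation of the cyclic correlation of F_α at t = s·h vanishes: E_α[ RC_{F_α}(s·h) ] = 0. -/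
/-!
Translating by `s·h` moves each block of `ℤ/Hℤ` to the block `s` further on without changing the
position inside it, so `F_α(x + s·h)` and `F_α(x)` read `f` at `k + α_{b+s}` and `k + α_b` for two
distinct coordinates `b + s ≠ b` of `α`. Averaging over `α` the two coordinates are independent,
and the average of `f(k + α_{b+s})` alone is the mean of `f`, which is `0`.
-/

theorem Fintype.sum_pi_mul_apply_eq_zero {ι β R : Type*} [Fintype ι] [DecidableEq ι] [Fintype β]
    [NonUnitalNonAssocSemiring R] {i j : ι} (hij : i ≠ j) (g g' : β → R)
    (hg : ∑ v, g v = 0) : ∑ α : ι → β, g (α i) * g' (α j) = 0 := by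
  rw [← (Equiv.piSplitAt i fun _ => β).symm.sum_comp, Fintype.sum_prod_type]
  simp only [Equiv.piSplitAt_symm_apply, dif_pos, dif_neg hij.symm, ← Finset.mul_sum]
  rw [← Finset.sum_mul, hg, zero_mul]

theorem phiMap_add_natCast_mul {h q : ℕ} [NeZero h] [NeZero q] (α : ZMod q → ZMod h)
    (s : ℕ) (x : ZMod (q * h)) :
    phiMap h q α (x + ((s * h : ℕ) : ZMod (q * h))) = phiMap h q (fun b => α (b + s)) x := by
  have hval : (x + ((s * h : ℕ) : ZMod (q * h))).val = (x.val + s * h) % (q * h) := by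
    rw [ZMod.val_add, ZMod.val_natCast, Nat.add_mod_mod]
  have hdiv : (x.val + s * h) % (q * h) / h = (x.val / h + s) % q := by
    generalize x.val = a
    rw [mul_comm q h, Nat.mod_mul_right_div_self, Nat.add_mul_div_right _ _ (NeZero.pos h)]
  simp only [phiMap, hval, hdiv, Nat.mod_mod_of_dvd _ (dvd_mul_left h q),
    Nat.add_mul_mod_self_right, ZMod.natCast_mod, Nat.cast_add]

theorem ZMod.add_natCast_ne_self {q s : ℕ} (hs0 : 0 < s) (hsq : s < q) (b : ZMod q) :
    b + s ≠ b := by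
  rw [Ne, add_eq_left, ZMod.natCast_eq_zero_iff]
  exact fun hdvd => (Nat.le_of_dvd hs0 hdvd).not_gt hsq

/-- Let `f : ℤ/hℤ → ℂ` have zero mean and let `α` be uniformly
distributed on `(ℤ/hℤ)^q` (average over all `h^q` tuples).  Then for every integer `s`
with `1 ≤ s ≤ q − 1`, the expectation of the cyclic correlation of `F_α = f ∘ φ_α` at
`t = s·h` vanishes. -/
theorem expectation_cyclicCorr_comp_phiMap_eq_zero
    (h q : ℕ) [NeZero h] [NeZero q] (f : ZMod h → ℂ)
    (hf : ∑ j : ZMod h, f j = 0)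
    (s : ℕ) (hs1 : 1 ≤ s) (hs2 : s ≤ q - 1) :
    ((h : ℂ) ^ q)⁻¹ *
        ∑ α : ZMod q → ZMod h,
          cyclicCorr (q * h) (fun x => f (phiMap h q α x)) ((s * h : ℕ) : ZMod (q * h))
      = 0 := by
  have hsq : s < q := by omega
  refine mul_eq_zero_of_right _ ?_
  simp only [cyclicCorr, ← Finset.mul_sum, phiMap_add_natCast_mul]
  rw [Finset.sum_comm]
  refine mul_eq_zero_of_right _ (Finset.sum_eq_zero fun x _ => ?_)
  set k : ZMod h := ((x.val % h : ℕ) : ZMod h)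
  have hshift : ∑ v, f (k + v) = 0 := (Equiv.sum_comp (Equiv.addLeft k) f).trans hf
  exact Fintype.sum_pi_mul_apply_eq_zero (ZMod.add_natCast_ne_self hs1 hsq _)
    (fun v => f (k + v)) (fun v => starRingEnd ℂ (f (k + v))) hshift
end
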